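/- With the fibrations and equivalences as defined, the category EFF is a path category: it satisfies all seven axioms (isomorphisms are fibrations and fibrations are closed under composition; there is a terminal object to which every map is a fibration; pullbacks of fibrations along arbitrary maps exist and are fibrations; isomorphisms are equivalences and equivalences satisfy 2-out-of-6; every object has a path object; trivial fibrations are stable under pullback; trivial fibrations have sections). -/

import Mathlib

namespace EffPaper

/-! ### A small kit for tracking by partial computable functions.

We encode "partial computable function" via Mathlib's `Partrec` on `ℕ →. ℕ`.
`CompComputes I O` says: there is a partial computable function which, on the input
`I x`, converges and outputs `O x` (for every `x` in some index type `X`).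
`CompFinds I S` says: there is a partial computable function which, on the input
`I x`, converges and outputs some element of the set `S x`. -/

def CompComputes {X : Sort*} (I O : X → ℕ) : Prop :=
  ∃ F : ℕ →. ℕ, Partrec F ∧ ∀ x, O x ∈ F (I x)

def CompFinds {X : Sort*} (I : X → ℕ) (S : X → Set ℕ) : Prop :=
  ∃ F : ℕ →. ℕ, Partrec F ∧ ∀ x, ∃ k, k ∈ F (I x) ∧ k ∈ S x

namespace CompComputes

protected theorem id {X : Sort*} (I : X → ℕ) : CompComputes I I :=
  ⟨fun n => Part.some n, Partrec.some, fun x => Part.mem_some _⟩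

protected theorem const {X : Sort*} (I : X → ℕ) (c : ℕ) : CompComputes I fun _ => c :=
  ⟨fun _ => Part.some c, (Computable.const c).partrec, fun _ => Part.mem_some _⟩

protected theorem comp {X : Sort*} {I M O : X → ℕ}
    (h₂ : CompComputes M O) (h₁ : CompComputes I M) : CompComputes I O := by
  obtain ⟨F₁, pF₁, s₁⟩ := h₁
  obtain ⟨F₂, pF₂, s₂⟩ := h₂
  refine ⟨fun n => (F₁ n).bind F₂, pF₁.bind (pF₂.comp Computable.snd), fun x => ?_⟩
  exact Part.mem_bind_iff.mpr ⟨M x, s₁ x, s₂ x⟩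

protected theorem pair {X : Sort*} {I a b : X → ℕ}
    (ha : CompComputes I a) (hb : CompComputes I b) :
    CompComputes I (fun x => Nat.pair (a x) (b x)) := by
  obtain ⟨F₁, pF₁, s₁⟩ := ha
  obtain ⟨F₂, pF₂, s₂⟩ := hb
  refine ⟨fun n => (F₁ n).bind fun u => (F₂ n).map fun v => Nat.pair u v, ?_, fun x => ?_⟩
  · refine pF₁.bind ?_
    have : Computable₂ fun (p : ℕ × ℕ) (v : ℕ) => Nat.pair p.2 v :=
      Primrec₂.to_comp (Primrec₂.natPair.comp (Primrec.snd.comp Primrec.fst) Primrec.snd)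
    exact Partrec.map (pF₂.comp Computable.fst) this
  · exact Part.mem_bind_iff.mpr ⟨a x, s₁ x, (Part.mem_map_iff _).mpr ⟨b x, s₂ x, rfl⟩⟩

protected theorem unpairL {X : Sort*} (I : X → ℕ) :
    CompComputes I (fun x => (I x).unpair.1) :=
  ⟨fun n => Part.some n.unpair.1,
    (Primrec.to_comp (Primrec.fst.comp Primrec.unpair)).partrec, fun _ => Part.mem_some _⟩

protected theorem unpairR {X : Sort*} (I : X → ℕ) :
    CompComputes I (fun x => (I x).unpair.2) :=
  ⟨fun n => Part.some n.unpair.2,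
    (Primrec.to_comp (Primrec.snd.comp Primrec.unpair)).partrec, fun _ => Part.mem_some _⟩

protected theorem projL {X : Sort*} (a b : X → ℕ) :
    CompComputes (fun x => Nat.pair (a x) (b x)) a := by
  have := CompComputes.unpairL (X := X) (fun x => Nat.pair (a x) (b x))
  simpa [Nat.unpair_pair] using this

protected theorem projR {X : Sort*} (a b : X → ℕ) :
    CompComputes (fun x => Nat.pair (a x) (b x)) b := by
  have := CompComputes.unpairR (X := X) (fun x => Nat.pair (a x) (b x))
  simpa [Nat.unpair_pair] using this

protected theorem precomp {X Y : Sort*} {I O : X → ℕ} (h : CompComputes I O) (e : Y → X) :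
    CompComputes (fun y => I (e y)) (fun y => O (e y)) := by
  obtain ⟨F, pF, s⟩ := h
  exact ⟨F, pF, fun y => s (e y)⟩

protected theorem toFinds {X : Sort*} {I o : X → ℕ} {S : X → Set ℕ}
    (h : CompComputes I o) (hm : ∀ x, o x ∈ S x) : CompFinds I S := by
  obtain ⟨F, pF, s⟩ := h
  exact ⟨F, pF, fun x => ⟨o x, s x, hm x⟩⟩

end CompComputes

namespace CompFinds

protected theorem toComputes {X : Sort*} {I : X → ℕ} {S : X → Set ℕ} (h : CompFinds I S) :
    ∃ o : X → ℕ, (∀ x, o x ∈ S x) ∧ CompComputes I o := by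
  obtain ⟨F, pF, s⟩ := h
  refine ⟨fun x => (s x).choose, fun x => (s x).choose_spec.2, F, pF, fun x => (s x).choose_spec.1⟩

/-- Reindex a `CompFinds` along `e` and chase the input through a computable function. -/
protected theorem via {Y X : Sort*} {J : X → ℕ} {S : X → Set ℕ} (h : CompFinds J S)
    {I : Y → ℕ} (e : Y → X) (hc : CompComputes I (fun y => J (e y))) :
    CompFinds I (fun y => S (e y)) := by
  obtain ⟨o, hm, hcc⟩ := h.toComputes
  exact CompComputes.toFinds ((hcc.precomp e).comp hc) (fun y => hm (e y))

end CompFinds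

end EffPaper

namespace EffPaper

open CategoryTheory

universe v u

/-! ### Path categories (Van den Berg–Moerdijk style), abstractly.

A `PathStruct` on a category is a pair of classes of maps: fibrations and equivalences.
`IsPathCategory` expresses the seven axioms of a path category. -/

structure PathStruct (C : Type u) [Category.{v} C] where
  Fib : ∀ ⦃X Y : C⦄, (X ⟶ Y) → Prop
  Eqv : ∀ ⦃X Y : C⦄, (X ⟶ Y) → Prop

section PathCatDefs

variable {C : Type u} [Category.{v} C]

/-- `T` is a terminal object. -/
def IsTerminalObj (T : C) : Prop := ∀ Z : C, ∃ f : Z ⟶ T, ∀ g : Z ⟶ T, g = f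

/-- The square with projections `p₁, p₂` is a pullback of the cospan `f, g`. -/
def IsPB {P X Y Z : C} (p₁ : P ⟶ X) (p₂ : P ⟶ Y) (f : X ⟶ Z) (g : Y ⟶ Z) : Prop :=
  p₁ ≫ f = p₂ ≫ g ∧ ∀ (Q : C) (q₁ : Q ⟶ X) (q₂ : Q ⟶ Y), q₁ ≫ f = q₂ ≫ g →
    ∃! h : Q ⟶ P, h ≫ p₁ = q₁ ∧ h ≫ p₂ = q₂

/-- `p₁, p₂` exhibit their common domain as a binary product of `X` and `Y`. -/
def IsBinProd {P X Y : C} (p₁ : P ⟶ X) (p₂ : P ⟶ Y) : Prop :=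
  ∀ (Q : C) (q₁ : Q ⟶ X) (q₂ : Q ⟶ Y), ∃! h : Q ⟶ P, h ≫ p₁ = q₁ ∧ h ≫ p₂ = q₂

variable (S : PathStruct C)

/-- `X → PX → X × X` is a path object for `X`: the first map is an equivalence, the
second (the pairing of `s` and `t` into a binary product `X × X`) is a fibration,
and the composite is the diagonal. -/
def IsPathObj {X PX : C} (r : X ⟶ PX) (s t : PX ⟶ X) : Prop :=
  S.Eqv r ∧ r ≫ s = 𝟙 X ∧ r ≫ t = 𝟙 X ∧
  ∃ (W : C) (π₁ π₂ : W ⟶ X) (h : PX ⟶ W),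
    IsBinProd π₁ π₂ ∧ h ≫ π₁ = s ∧ h ≫ π₂ = t ∧ S.Fib h

/-- A path object for `p : X ⟶ I` in the slice path category `C(I)`:
a factorisation of the fibrewise diagonal `X ⟶ X ×_I X` as an equivalence `r`
followed by a fibration. -/
def IsRelPathObj {X I PX : C} (p : X ⟶ I) (r : X ⟶ PX) (s t : PX ⟶ X) : Prop :=
  S.Eqv r ∧ r ≫ s = 𝟙 X ∧ r ≫ t = 𝟙 X ∧ s ≫ p = t ≫ p ∧
  ∃ (W : C) (π₁ π₂ : W ⟶ X) (h : PX ⟶ W),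
    IsPB π₁ π₂ p p ∧ h ≫ π₁ = s ∧ h ≫ π₂ = t ∧ S.Fib h

/-- The seven axioms for a path category. -/
structure IsPathCategory : Prop where
  fib_of_iso : ∀ {X Y : C} (f : X ⟶ Y), IsIso f → S.Fib f
  fib_comp : ∀ {X Y Z : C} (f : X ⟶ Y) (g : Y ⟶ Z), S.Fib f → S.Fib g → S.Fib (f ≫ g)
  terminal : ∃ T : C, IsTerminalObj T ∧ ∀ (X : C) (f : X ⟶ T), S.Fib f
  pullback : ∀ {X Y Z : C} (f : X ⟶ Z) (g : Y ⟶ Z), S.Fib f →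
    ∃ (P : C) (p₁ : P ⟶ X) (p₂ : P ⟶ Y), IsPB p₁ p₂ f g ∧ S.Fib p₂
  eqv_of_iso : ∀ {X Y : C} (f : X ⟶ Y), IsIso f → S.Eqv f
  two_out_of_six : ∀ {X Y Z W : C} (f : X ⟶ Y) (g : Y ⟶ Z) (h : Z ⟶ W),
    S.Eqv (f ≫ g) → S.Eqv (g ≫ h) →
    S.Eqv f ∧ S.Eqv g ∧ S.Eqv h ∧ S.Eqv (f ≫ g ≫ h)
  path_obj : ∀ X : C, ∃ (PX : C) (r : X ⟶ PX) (s t : PX ⟶ X), IsPathObj S r s t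
  triv_fib_pb : ∀ {X Y Z P : C} (f : X ⟶ Z) (g : Y ⟶ Z) (p₁ : P ⟶ X) (p₂ : P ⟶ Y),
    S.Fib f → S.Eqv f → IsPB p₁ p₂ f g → S.Fib p₂ ∧ S.Eqv p₂
  triv_fib_sect : ∀ {X Y : C} (f : X ⟶ Y), S.Fib f → S.Eqv f → ∃ s : Y ⟶ X, s ≫ f = 𝟙 Y

/-- Two parallel maps are homotopic: `(f,g)` factors through some path object. -/
def Homotopic {Z X : C} (f g : Z ⟶ X) : Prop :=
  ∃ (PX : C) (r : X ⟶ PX) (s t : PX ⟶ X), IsPathObj S r s t ∧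
    ∃ H : Z ⟶ PX, H ≫ s = f ∧ H ≫ t = g

/-- `f` and `g` are fibrewise homotopic over the codomain of `p`:
`(f,g)` factors through some path object of `p` in the slice. -/
def FibHomotopic {Z X I : C} (p : X ⟶ I) (f g : Z ⟶ X) : Prop :=
  ∃ (PX : C) (r : X ⟶ PX) (s t : PX ⟶ X), IsRelPathObj S p r s t ∧
    ∃ H : Z ⟶ PX, H ≫ s = f ∧ H ≫ t = g

/-- `IsNTypeFib S n f` says that `f` is a fibration of `(n-2)`-types; so `n = 0`
corresponds to hlevel `-2` (trivial fibrations), `n = 1` to propositions,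
`n = 2` to sets and `n = 3` to groupoids. -/
def IsNTypeFib : ℕ → ∀ ⦃Y X : C⦄, (Y ⟶ X) → Prop
  | 0, _, _, f => S.Fib f ∧ S.Eqv f
  | n+1, Y, _, f => S.Fib f ∧ ∃ (PY W : C) (r : Y ⟶ PY) (s t : PY ⟶ Y)
      (π₁ π₂ : W ⟶ Y) (h : PY ⟶ W),
      IsRelPathObj S f r s t ∧ IsPB π₁ π₂ f f ∧ h ≫ π₁ = s ∧ h ≫ π₂ = t ∧
      IsNTypeFib n h

/-- The (strictly) commutative square with vertical fibrations `g` (left) and `f` (right),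
top `top` and bottom `bot`, is a homotopy pullback: the induced map to the actual
pullback is an equivalence. -/
def IsHomotopyPB {D Cc B A : C} (g : D ⟶ Cc) (top : D ⟶ B) (f : B ⟶ A) (bot : Cc ⟶ A) :
    Prop :=
  g ≫ bot = top ≫ f ∧ ∃ (P : C) (p₁ : P ⟶ Cc) (p₂ : P ⟶ B) (h : D ⟶ P),
    IsPB p₁ p₂ bot f ∧ h ≫ p₁ = g ∧ h ≫ p₂ = top ∧ S.Eqv h

/-- A transport structure on the fibration `p : Y ⟶ X`, relative to the path object
`(PX, r, s, t)` and the pullback `(Q, q₁, q₂)` of `s : PX ⟶ X` along `p`: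
a map `Γ : Y ×_X PX ⟶ Y` with `p ∘ Γ = t ∘ q₂` and `Γ ∘ (1_Y, r ∘ p) ≃_X 1_Y`. -/
def IsTransport {Y X PX Q : C} (p : Y ⟶ X) (r : X ⟶ PX) (s t : PX ⟶ X)
    (q₁ : Q ⟶ Y) (q₂ : Q ⟶ PX) (Γ : Q ⟶ Y) : Prop :=
  Γ ≫ p = q₂ ≫ t ∧
  ∀ j : Y ⟶ Q, j ≫ q₁ = 𝟙 Y → j ≫ q₂ = p ≫ r → FibHomotopic S p (j ≫ Γ) (𝟙 Y)

/-- A fibration `p : Y ⟶ X` is univalent: whenever `f, g : Z ⟶ X` and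
`w : f*p ⟶ g*p` is an equivalence over `Z`, there is a homotopy `H` from `f` to `g`
such that `w` is fibrewise homotopic over `Z` to the map induced by `H` and a
transport structure on `p`. -/
def Univalent {Y X : C} (p : Y ⟶ X) : Prop :=
  ∀ {Z Zf Zg : C} (f g : Z ⟶ X) (a₁ : Zf ⟶ Z) (a₂ : Zf ⟶ Y) (b₁ : Zg ⟶ Z) (b₂ : Zg ⟶ Y),
    IsPB a₁ a₂ f p → IsPB b₁ b₂ g p →
    ∀ w : Zf ⟶ Zg, w ≫ b₁ = a₁ → S.Eqv w →
    ∃ (PX Q : C) (r : X ⟶ PX) (s t : PX ⟶ X) (q₁ : Q ⟶ Y) (q₂ : Q ⟶ PX) (Γ : Q ⟶ Y)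
      (H : Z ⟶ PX) (k : Zf ⟶ Q) (w' : Zf ⟶ Zg),
      IsPathObj S r s t ∧ IsPB q₁ q₂ p s ∧ IsTransport S p r s t q₁ q₂ Γ ∧
      H ≫ s = f ∧ H ≫ t = g ∧
      k ≫ q₁ = a₂ ∧ k ≫ q₂ = a₁ ≫ H ∧
      w' ≫ b₁ = a₁ ∧ w' ≫ b₂ = k ≫ Γ ∧
      FibHomotopic S b₁ w w'

/-- `π : E ⟶ U` is a representation for the class `Small`: it is small, and every
small fibration is a homotopy pullback of it. -/
def IsRepresentation (Small : ∀ ⦃X Y : C⦄, (X ⟶ Y) → Prop) {E U : C} (π : E ⟶ U) : Prop :=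
  Small π ∧ ∀ ⦃B A : C⦄ (f : B ⟶ A), Small f →
    ∃ (c : A ⟶ U) (top : B ⟶ E), IsHomotopyPB S f top π c

/-- `M` is a good lift for the universal property of the homotopy Π-type
`(pE, u₁, u₂, ε)` of `g` along `f`, at the map `h : A ⟶ X` with chosen pullback
`(Ah, v₁, v₂)` of `h` along `f` and `m : f*h ⟶ g` over `Y`. -/
def HPiLiftGood {Y X Z E F A Ah : C} (f : Y ⟶ X) (g : Z ⟶ Y) (pE : E ⟶ X)
    (u₁ : F ⟶ E) (u₂ : F ⟶ Y) (ε : F ⟶ Z)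
    (h : A ⟶ X) (v₁ : Ah ⟶ A) (v₂ : Ah ⟶ Y) (m : Ah ⟶ Z) (M : A ⟶ E) : Prop :=
  M ≫ pE = h ∧ ∀ fM : Ah ⟶ F, fM ≫ u₁ = v₁ ≫ M → fM ≫ u₂ = v₂ →
    FibHomotopic S g (fM ≫ ε) m

/-- `(pE, u₁, u₂, ε)` is a homotopy Π-type of the fibration `g : Z ⟶ Y` along the
fibration `f : Y ⟶ X`.  Here `pE : E ⟶ X` is the Π-fibration, `(F, u₁, u₂)` is a
pullback of `pE` along `f`, and `ε : f*pE ⟶ g` is the counit (a map over `Y`). -/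
structure IsHPi {Y X Z E F : C} (f : Y ⟶ X) (g : Z ⟶ Y) (pE : E ⟶ X)
    (u₁ : F ⟶ E) (u₂ : F ⟶ Y) (ε : F ⟶ Z) : Prop where
  fib : S.Fib pE
  pb : IsPB u₁ u₂ pE f
  over' : ε ≫ g = u₂
  lift : ∀ {A Ah : C} (h : A ⟶ X) (v₁ : Ah ⟶ A) (v₂ : Ah ⟶ Y), IsPB v₁ v₂ h f →
    ∀ m : Ah ⟶ Z, m ≫ g = v₂ →
      ∃ M : A ⟶ E, HPiLiftGood S f g pE u₁ u₂ ε h v₁ v₂ m M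
  unique : ∀ {A Ah : C} (h : A ⟶ X) (v₁ : Ah ⟶ A) (v₂ : Ah ⟶ Y), IsPB v₁ v₂ h f →
    ∀ m : Ah ⟶ Z, m ≫ g = v₂ → ∀ M M' : A ⟶ E,
      HPiLiftGood S f g pE u₁ u₂ ε h v₁ v₂ m M →
      HPiLiftGood S f g pE u₁ u₂ ε h v₁ v₂ m M' →
      FibHomotopic S pE M M'

/-- The path category has homotopy Π-types. -/
def HasHPi : Prop := ∀ ⦃Y X Z : C⦄ (f : Y ⟶ X) (g : Z ⟶ Y), S.Fib f → S.Fib g →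
  ∃ (E F : C) (pE : E ⟶ X) (u₁ : F ⟶ E) (u₂ : F ⟶ Y) (ε : F ⟶ Z),
    IsHPi S f g pE u₁ u₂ ε

/-- A class of small fibrations: contained in the fibrations, containing all
isomorphisms, closed under composition and stable under homotopy pullback. -/
def IsSmallClass (Small : ∀ ⦃X Y : C⦄, (X ⟶ Y) → Prop) : Prop :=
  (∀ ⦃X Y : C⦄ (f : X ⟶ Y), Small f → S.Fib f) ∧
  (∀ ⦃X Y : C⦄ (f : X ⟶ Y), IsIso f → Small f) ∧
  (∀ ⦃X Y Z : C⦄ (f : X ⟶ Y) (g : Y ⟶ Z), Small f → Small g → Small (f ≫ g)) ∧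
  (∀ ⦃D Cc B A : C⦄ (g : D ⟶ Cc) (top : D ⟶ B) (f : B ⟶ A) (bot : Cc ⟶ A),
    S.Fib g → S.Fib f → Small f → IsHomotopyPB S g top f bot → Small g)

/-- The class `Small` is closed under homotopy Π-types along arbitrary fibrations:
it is impredicative (polymorphic). -/
def ClosedUnderHPi (Small : ∀ ⦃X Y : C⦄, (X ⟶ Y) → Prop) : Prop :=
  ∀ ⦃Y X Z : C⦄ (f : Y ⟶ X) (g : Z ⟶ Y), S.Fib f → Small g →
    ∀ ⦃E F : C⦄ (pE : E ⟶ X) (u₁ : F ⟶ E) (u₂ : F ⟶ Y) (ε : F ⟶ Z),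
      IsHPi S f g pE u₁ u₂ ε → Small pE

end PathCatDefs

end EffPaper
open CategoryTheory
namespace EffPaper
-- [assume p1 kit present]

/-! ### The category `EFF`. -/

/-- An object of `EFF`: a set `A`, a realizer function `α : A → ℕ`, sets of 1-cells
`hom a a' ⊆ ℕ`, and partial computable functions computing identity, inverse and
composite 1-cells from the realizers of the relevant data. -/
structure EffObj : Type 1 where
  A : Type
  α : A → ℕ
  hom : A → A → Set ℕ
  idc : CompFinds (fun a : A => α a) (fun a => hom a a)
  invc : CompFinds
    (fun x : {p : A × A × ℕ // p.2.2 ∈ hom p.1 p.2.1} =>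
      Nat.pair (α x.1.1) (Nat.pair (α x.1.2.1) x.1.2.2))
    (fun x => hom x.1.2.1 x.1.1)
  compc : CompFinds
    (fun x : {p : A × A × A × ℕ × ℕ //
        p.2.2.2.1 ∈ hom p.1 p.2.1 ∧ p.2.2.2.2 ∈ hom p.2.1 p.2.2.1} =>
      Nat.pair (α x.1.1) (Nat.pair (α x.1.2.1) (Nat.pair (α x.1.2.2.1)
        (Nat.pair x.1.2.2.2.1 x.1.2.2.2.2))))
    (fun x => hom x.1.1 x.1.2.2.1)

/-- The 1-cells of an object of `EFF` between `a` and `a'`. -/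
def EffObj.Cell (A : EffObj) (a a' : A.A) : Type := {n : ℕ // n ∈ A.hom a a'}

/-- A morphism of `EFF`: a function on 0-cells and functions on 1-cells, both
computably tracked. -/
structure EffHom (B A : EffObj) : Type where
  f0 : B.A → A.A
  f1 : ∀ b b' : B.A, B.Cell b b' → A.Cell (f0 b) (f0 b')
  tr0 : CompComputes (fun b : B.A => B.α b) (fun b => A.α (f0 b))
  tr1 : CompComputes
    (fun x : (b : B.A) × (b' : B.A) × B.Cell b b' =>
      Nat.pair (B.α x.1) (Nat.pair (B.α x.2.1) x.2.2.val))
    (fun x => (f1 x.1 x.2.1 x.2.2).val)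

instance : Category.{0} EffObj where
  Hom B A := EffHom B A
  id A :=
    { f0 := fun a => a
      f1 := fun _ _ π => π
      tr0 := CompComputes.id _
      tr1 := (CompComputes.projR _ _).comp (CompComputes.projR _ _) }
  comp {X Y Z} f g :=
    { f0 := fun b => g.f0 (f.f0 b)
      f1 := fun b b' π => g.f1 _ _ (f.f1 b b' π)
      tr0 := (g.tr0.precomp f.f0).comp f.tr0
      tr1 := by
        have hg := g.tr1.precomp
          (fun x : (b : X.A) × (b' : X.A) × X.Cell b b' =>
            (⟨f.f0 x.1, f.f0 x.2.1, f.f1 x.1 x.2.1 x.2.2⟩ :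
              (b : Y.A) × (b' : Y.A) × Y.Cell b b'))
        refine hg.comp ?_
        refine CompComputes.pair ?_ (CompComputes.pair ?_ f.tr1)
        · exact (f.tr0.precomp (fun x : (b : X.A) × (b' : X.A) × X.Cell b b' => x.1)).comp (CompComputes.projL _ _)
        · exact (f.tr0.precomp (fun x : (b : X.A) × (b' : X.A) × X.Cell b b' => x.2.1)).comp
            ((CompComputes.projL _ _).comp (CompComputes.projR _ _)) }

end EffPaper
namespace EffPaper
open CategoryTheory

/-! ### Homotopies, equivalences and fibrations in `EFF`. -/

/-- Two parallel maps in `EFF` are homotopic if there is a partial computable function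
computing, from the realizer of each `b`, a 1-cell from `f b` to `g b`. -/
def EffHomotopic {B A : EffObj} (f g : EffHom B A) : Prop :=
  CompFinds (fun b : B.A => B.α b) (fun b => A.hom (f.f0 b) (g.f0 b))

/-- A map in `EFF` is a (homotopy) equivalence if it has a homotopy inverse. -/
def EffEqv {B A : EffObj} (f : B ⟶ A) : Prop :=
  ∃ g : A ⟶ B, EffHomotopic (f ≫ g) (𝟙 B) ∧ EffHomotopic (g ≫ f) (𝟙 A)

/-- A map in `EFF` is a fibration: (i) 1-cells `π : f b → a` downstairs can be
computably lifted to 1-cells `ρ : b → b'` upstairs with `f b' = a`, `f ρ = π`;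
(ii) given `ρ ∈ ℬ(b,b')` and `π ∈ 𝒜(fb,fb')` one can compute `ρ' ∈ ℬ(b,b')`
with `f ρ' = π`. -/
def EffFib {B A : EffObj} (f : B ⟶ A) : Prop :=
  (∃ φ ψ : ℕ →. ℕ, Partrec φ ∧ Partrec ψ ∧
    ∀ (b : B.A) (a : A.A) (π : ℕ), π ∈ A.hom (f.f0 b) a →
      ∃ (b' : B.A) (ρ : B.Cell b b'),
        f.f0 b' = a ∧ (f.f1 b b' ρ).val = π ∧
        B.α b' ∈ φ (Nat.pair (B.α b) (Nat.pair (A.α a) π)) ∧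
        ρ.val ∈ ψ (Nat.pair (B.α b) (Nat.pair (A.α a) π))) ∧
  (∃ χ : ℕ →. ℕ, Partrec χ ∧
    ∀ (b b' : B.A) (ρ : B.Cell b b') (π : ℕ), π ∈ A.hom (f.f0 b) (f.f0 b') →
      ∃ ρ' : B.Cell b b', (f.f1 b b' ρ').val = π ∧
        ρ'.val ∈ χ (Nat.pair (B.α b) (Nat.pair (B.α b') (Nat.pair ρ.val π))))

/-- The path structure on `EFF`: fibrations and (homotopy) equivalences. -/
def EffPS : PathStruct EffObj where
  Fib := fun {_ _} f => EffFib f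
  Eqv := fun {_ _} f => EffEqv f

/-- A fibration in `EFF` is a standard discrete fibration if elements of the domain
are determined by their image and their realizer. -/
def EffStdDisc {B A : EffObj} (f : B ⟶ A) : Prop :=
  EffFib f ∧ ∀ b b' : B.A, f.f0 b = f.f0 b' → B.α b = B.α b' → b = b'

/-- A fibration in `EFF` is discrete if it can be written as a standard discrete
fibration after an equivalence. -/
def EffDisc {B A : EffObj} (f : B ⟶ A) : Prop :=
  EffFib f ∧ ∃ (B' : EffObj) (w : B ⟶ B') (g : B' ⟶ A),
    EffEqv w ∧ EffStdDisc g ∧ w ≫ g = f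

end EffPaper

/-!
Everything in `EFF` carries realizers, and every construction has to be computable from
them. We therefore work with families of points and cells indexed by an arbitrary type and
tracked by a common input (`TrackedGroupoid`, `HasTrackedLifts`, `HasTrackedTransport`).
`EffObj` and `EffFib` are these notions at one universal index, and in family form the
constructions compose like ordinary functions.

The axioms then become groupoid computations. Fibrations compose by lifting twice. The
pullback of a fibration `f` along `g` has as cells the pairs of cells with equal images;
there are enough of them because the transport of `f` corrects the first component of any
pair. The binary product is the pullback over the terminal object, and the path object of
`X` has the cells of `X` as points. A trivial fibration has a strict section, obtained by
lifting a homotopy `w ≫ f ∼ 𝟙` pointwise and transporting the cells, and this makes its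
pullbacks equivalences again. Homotopy equivalences are the maps inverted in the homotopy
category, so they satisfy 2-out-of-6 because isomorphisms do.
-/
namespace EffPaper

open CategoryTheory

namespace CompComputes

variable {X : Sort*}

theorem unpair_fst {I v : X → ℕ} (h : CompComputes I v) :
    CompComputes I (fun x => (v x).unpair.1) :=
  (CompComputes.unpairL v).comp h

theorem unpair_snd {I v : X → ℕ} (h : CompComputes I v) :
    CompComputes I (fun x => (v x).unpair.2) :=
  (CompComputes.unpairR v).comp h

theorem proj32 (a b c : X → ℕ) :
    CompComputes (fun x => Nat.pair (a x) (Nat.pair (b x) (c x))) b :=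
  (CompComputes.projL b c).comp (CompComputes.projR _ _)

theorem proj33 (a b c : X → ℕ) :
    CompComputes (fun x => Nat.pair (a x) (Nat.pair (b x) (c x))) c :=
  (CompComputes.projR b c).comp (CompComputes.projR _ _)

theorem proj42 (a b c d : X → ℕ) :
    CompComputes (fun x => Nat.pair (a x) (Nat.pair (b x) (Nat.pair (c x) (d x)))) b :=
  (CompComputes.projL b _).comp (CompComputes.projR _ _)

theorem proj43 (a b c d : X → ℕ) :
    CompComputes (fun x => Nat.pair (a x) (Nat.pair (b x) (Nat.pair (c x) (d x)))) c :=
  (CompComputes.proj32 b c d).comp (CompComputes.projR _ _)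

theorem proj44 (a b c d : X → ℕ) :
    CompComputes (fun x => Nat.pair (a x) (Nat.pair (b x) (Nat.pair (c x) (d x)))) d :=
  (CompComputes.proj33 b c d).comp (CompComputes.projR _ _)

end CompComputes

theorem compFinds_iff {X : Sort*} {I : X → ℕ} {S : X → Set ℕ} :
    CompFinds I S ↔ ∃ c : ∀ x, {n // n ∈ S x}, CompComputes I (fun x => (c x).val) := by
  refine ⟨fun h => ?_, fun ⟨c, hc⟩ => hc.toFinds fun x => (c x).prop⟩
  obtain ⟨o, hm, ho⟩ := h.toComputes
  exact ⟨fun x => ⟨o x, hm x⟩, ho⟩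

structure TrackedGroupoid (T : Type) (α : T → ℕ) (hom : T → T → Set ℕ) : Prop where
  id : ∀ {ι : Type} {I : ι → ℕ} {a : ι → T}, CompComputes I (fun x => α (a x)) →
    ∃ c : ∀ x, {n // n ∈ hom (a x) (a x)}, CompComputes I (fun x => (c x).val)
  inv : ∀ {ι : Type} {I : ι → ℕ} {a a' : ι → T} (c : ∀ x, {n // n ∈ hom (a x) (a' x)}),
    CompComputes I (fun x => α (a x)) → CompComputes I (fun x => α (a' x)) →
    CompComputes I (fun x => (c x).val) →
    ∃ c' : ∀ x, {n // n ∈ hom (a' x) (a x)}, CompComputes I (fun x => (c' x).val)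
  comp : ∀ {ι : Type} {I : ι → ℕ} {a a' a'' : ι → T} (c : ∀ x, {n // n ∈ hom (a x) (a' x)})
    (c' : ∀ x, {n // n ∈ hom (a' x) (a'' x)}),
    CompComputes I (fun x => α (a x)) → CompComputes I (fun x => α (a' x)) →
    CompComputes I (fun x => α (a'' x)) → CompComputes I (fun x => (c x).val) →
    CompComputes I (fun x => (c' x).val) →
    ∃ c'' : ∀ x, {n // n ∈ hom (a x) (a'' x)}, CompComputes I (fun x => (c'' x).val)

theorem TrackedGroupoid.comap {T T' : Type} {α : T → ℕ} {hom : T → T → Set ℕ}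
    (h : TrackedGroupoid T α hom) (u : T' → T) (α' : T' → ℕ)
    (hu : CompComputes α' (fun t => α (u t))) :
    TrackedGroupoid T' α' (fun t t' => hom (u t) (u t')) where
  id ha := h.id ((hu.precomp _).comp ha)
  inv c ha ha' hc := h.inv c ((hu.precomp _).comp ha) ((hu.precomp _).comp ha') hc
  comp c c' ha ha' ha'' hc hc' :=
    h.comp c c' ((hu.precomp _).comp ha) ((hu.precomp _).comp ha') ((hu.precomp _).comp ha'')
      hc hc'

theorem EffObj.tracked (A : EffObj) : TrackedGroupoid A.A A.α A.hom where
  id {_ _ a} ha := compFinds_iff.mp (A.idc.via a ha)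
  inv {_ _ a a'} c ha ha' hc := compFinds_iff.mp <|
    A.invc.via (fun x => ⟨(a x, a' x, (c x).val), (c x).prop⟩) (ha.pair (ha'.pair hc))
  comp {_ _ a a' a''} c c' ha ha' ha'' hc hc' := compFinds_iff.mp <|
    A.compc.via (fun x => ⟨(a x, a' x, a'' x, (c x).val, (c' x).val), (c x).prop, (c' x).prop⟩)
      (ha.pair (ha'.pair (ha''.pair (hc.pair hc'))))

def EffObj.ofTracked (T : Type) (α : T → ℕ) (hom : T → T → Set ℕ)
    (h : TrackedGroupoid T α hom) : EffObj where
  A := T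
  α := α
  hom := hom
  idc := compFinds_iff.mpr (h.id (a := id) (CompComputes.id α))
  invc := compFinds_iff.mpr <|
    h.inv (ι := {p : T × T × ℕ // p.2.2 ∈ hom p.1 p.2.1})
      (a := fun x => x.1.1) (a' := fun x => x.1.2.1) (fun x => ⟨x.1.2.2, x.2⟩)
      (CompComputes.projL _ _) (CompComputes.proj32 _ _ _) (CompComputes.proj33 _ _ _)
  compc := compFinds_iff.mpr <|
    h.comp
      (ι := {p : T × T × T × ℕ × ℕ // p.2.2.2.1 ∈ hom p.1 p.2.1 ∧ p.2.2.2.2 ∈ hom p.2.1 p.2.2.1})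
      (a := fun x => x.1.1) (a' := fun x => x.1.2.1) (a'' := fun x => x.1.2.2.1)
      (fun x => ⟨x.1.2.2.2.1, x.2.1⟩) (fun x => ⟨x.1.2.2.2.2, x.2.2⟩)
      (CompComputes.projL _ _) (CompComputes.proj42 _ _ _ _) (CompComputes.proj43 _ _ _ _)
      ((CompComputes.projL _ _).comp (CompComputes.proj44 _ _ _ _))
      ((CompComputes.projR _ _).comp (CompComputes.proj44 _ _ _ _))

section Category

variable {C : Type*} [Category C]

theorem isIso_of_two_out_of_six {X Y Z W : C} (f : X ⟶ Y) (g : Y ⟶ Z)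
    (h : Z ⟶ W) [IsIso (f ≫ g)] [IsIso (g ≫ h)] :
    IsIso f ∧ IsIso g ∧ IsIso h ∧ IsIso (f ≫ g ≫ h) := by
  have : Mono g := mono_of_mono g h
  have : IsSplitEpi g := IsSplitEpi.mk' ⟨inv (f ≫ g) ≫ f, by simp⟩
  have : IsIso g := isIso_of_mono_of_isSplitEpi g
  have : IsIso f := IsIso.of_isIso_comp_right f g
  have : IsIso h := IsIso.of_isIso_comp_left g h
  exact ⟨inferInstance, inferInstance, inferInstance, inferInstance⟩

theorem IsPB.isPullback {P X Y Z : C} {p₁ : P ⟶ X} {p₂ : P ⟶ Y}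
    {f : X ⟶ Z} {g : Y ⟶ Z} (h : IsPB p₁ p₂ f g) : IsPullback p₁ p₂ f g := by
  obtain ⟨w, hu⟩ := h
  choose l hl using fun s : Limits.PullbackCone f g => (hu s.pt s.fst s.snd s.condition).exists
  exact IsPullback.of_isLimit' ⟨w⟩ (Limits.PullbackCone.IsLimit.mk w l (fun s => (hl s).1)
    (fun s => (hl s).2) fun s m h₁ h₂ =>
      (hu s.pt s.fst s.snd s.condition).unique ⟨h₁, h₂⟩ (hl s))

theorem IsPB.isBinProd {P X Y T : C} {p₁ : P ⟶ X} {p₂ : P ⟶ Y}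
    {f : X ⟶ T} {g : Y ⟶ T} (hT : IsTerminalObj T) (h : IsPB p₁ p₂ f g) : IsBinProd p₁ p₂ :=
  fun Q q₁ q₂ => h.2 Q q₁ q₂ <| by
    obtain ⟨t, ht⟩ := hT Q
    rw [ht (q₁ ≫ f), ht (q₂ ≫ g)]

end Category

abbrev EffObj.Path (A : EffObj) : Type := (a : A.A) × (a' : A.A) × A.Cell a a'

def EffObj.pathCode (A : EffObj) (x : A.Path) : ℕ :=
  Nat.pair (A.α x.1) (Nat.pair (A.α x.2.1) x.2.2.val)

theorem EffObj.pathCode_src (A : EffObj) : CompComputes A.pathCode (fun x => A.α x.1) :=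
  CompComputes.projL _ _

theorem EffObj.pathCode_tgt (A : EffObj) : CompComputes A.pathCode (fun x => A.α x.2.1) :=
  CompComputes.proj32 _ _ _

theorem EffObj.pathCode_cell (A : EffObj) : CompComputes A.pathCode (fun x => x.2.2.val) :=
  CompComputes.proj33 _ _ _

def EffObj.Cell.cast {A : EffObj} {a₁ a₂ b₁ b₂ : A.A} (c : A.Cell a₁ a₂) (h₁ : a₁ = b₁)
    (h₂ : a₂ = b₂) : A.Cell b₁ b₂ :=
  ⟨c.val, h₁ ▸ h₂ ▸ c.prop⟩

namespace EffHom

variable {B A : EffObj}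

theorem ext_val {f g : EffHom B A} (h0 : ∀ b, f.f0 b = g.f0 b)
    (h1 : ∀ (b b' : B.A) (ρ : B.Cell b b'), (f.f1 b b' ρ).val = (g.f1 b b' ρ).val) :
    f = g := by
  obtain ⟨f0, f1, ft0, ft1⟩ := f
  obtain ⟨g0, g1, gt0, gt1⟩ := g
  obtain rfl : f0 = g0 := funext h0
  obtain rfl : f1 = g1 := funext fun b => funext fun b' => funext fun ρ => Subtype.ext (h1 b b' ρ)
  rfl

theorem congr_f0 {f g : EffHom B A} (h : f = g) (b : B.A) : f.f0 b = g.f0 b := by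
  rw [h]

theorem congr_f1 {f g : EffHom B A} (h : f = g) (b b' : B.A) (ρ : B.Cell b b') :
    (f.f1 b b' ρ).val = (g.f1 b b' ρ).val := by
  subst h; rfl

theorem f1_val_congr (f : EffHom B A) {b₁ b₂ b₁' b₂' : B.A} (e₁ : b₁ = b₁') (e₂ : b₂ = b₂')
    (ρ : B.Cell b₁ b₂) (ρ' : B.Cell b₁' b₂') (hv : ρ.val = ρ'.val) :
    (f.f1 b₁ b₂ ρ).val = (f.f1 b₁' b₂' ρ').val := by
  subst e₁ e₂
  obtain rfl : ρ = ρ' := Subtype.ext hv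
  rfl

variable (f : EffHom B A) {ι : Type} {I : ι → ℕ}

theorem tracked_f0 {b : ι → B.A} (hb : CompComputes I (fun x => B.α (b x))) :
    CompComputes I (fun x => A.α (f.f0 (b x))) :=
  (f.tr0.precomp b).comp hb

theorem tracked_f1 {b b' : ι → B.A} (ρ : ∀ x, B.Cell (b x) (b' x))
    (hb : CompComputes I (fun x => B.α (b x))) (hb' : CompComputes I (fun x => B.α (b' x)))
    (hρ : CompComputes I (fun x => (ρ x).val)) :
    CompComputes I (fun x => (f.f1 (b x) (b' x) (ρ x)).val) :=
  (f.tr1.precomp fun x => ⟨b x, b' x, ρ x⟩).comp (hb.pair (hb'.pair hρ))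

end EffHom

section Homotopy

variable {B A : EffObj}

theorem effHomotopic_iff {f g : EffHom B A} :
    EffHomotopic f g ↔
      ∃ c : ∀ b, A.Cell (f.f0 b) (g.f0 b), CompComputes B.α (fun b => (c b).val) :=
  compFinds_iff

theorem EffHomotopic.refl (f : EffHom B A) : EffHomotopic f f := by
  obtain ⟨c, hc⟩ := A.tracked.id (a := f.f0) f.tr0
  exact effHomotopic_iff.mpr ⟨c, hc⟩

theorem EffHomotopic.of_eq {f g : EffHom B A} (h : f = g) : EffHomotopic f g :=
  h ▸ EffHomotopic.refl f

theorem EffHomotopic.symm {f g : EffHom B A} (h : EffHomotopic f g) : EffHomotopic g f := by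
  obtain ⟨c, hc⟩ := effHomotopic_iff.mp h
  obtain ⟨c', hc'⟩ := A.tracked.inv c f.tr0 g.tr0 hc
  exact effHomotopic_iff.mpr ⟨c', hc'⟩

theorem EffHomotopic.trans {f g k : EffHom B A} (h₁ : EffHomotopic f g)
    (h₂ : EffHomotopic g k) : EffHomotopic f k := by
  obtain ⟨c, hc⟩ := effHomotopic_iff.mp h₁
  obtain ⟨d, hd⟩ := effHomotopic_iff.mp h₂
  obtain ⟨e, he⟩ := A.tracked.comp c d f.tr0 g.tr0 k.tr0 hc hd
  exact effHomotopic_iff.mpr ⟨e, he⟩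

theorem EffHomotopic.whisker_left {C : EffObj} (e : C ⟶ B) {f g : B ⟶ A}
    (h : EffHomotopic f g) : EffHomotopic (e ≫ f) (e ≫ g) := by
  obtain ⟨c, hc⟩ := effHomotopic_iff.mp h
  exact effHomotopic_iff.mpr ⟨fun x => c (e.f0 x), (hc.precomp e.f0).comp e.tr0⟩

theorem EffHomotopic.whisker_right {C : EffObj} {f g : B ⟶ A} (k : A ⟶ C)
    (h : EffHomotopic f g) : EffHomotopic (f ≫ k) (g ≫ k) := by
  obtain ⟨c, hc⟩ := effHomotopic_iff.mp h
  exact effHomotopic_iff.mpr ⟨fun b => k.f1 _ _ (c b), k.tracked_f1 c f.tr0 g.tr0 hc⟩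

end Homotopy

def effHomotopyRel : HomRel EffObj := fun _ _ f g => EffHomotopic f g

instance : Congruence effHomotopyRel where
  equivalence := ⟨EffHomotopic.refl, EffHomotopic.symm, EffHomotopic.trans⟩
  comp_left e _ _ h := EffHomotopic.whisker_left e h
  comp_right k h := EffHomotopic.whisker_right k h

abbrev effHo : EffObj ⥤ Quotient effHomotopyRel := Quotient.functor effHomotopyRel

theorem effHo_map_eq_iff {B A : EffObj} (f g : B ⟶ A) :
    effHo.map f = effHo.map g ↔ EffHomotopic f g :=
  Quotient.functor_map_eq_iff _ f g

theorem effEqv_iff_isIso {B A : EffObj} (f : B ⟶ A) : EffEqv f ↔ IsIso (effHo.map f) := by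
  constructor
  · rintro ⟨g, hfg, hgf⟩
    refine ⟨effHo.map g, ?_, ?_⟩
    · rw [← effHo.map_comp, (effHo_map_eq_iff _ _).mpr hfg, effHo.map_id]
    · rw [← effHo.map_comp, (effHo_map_eq_iff _ _).mpr hgf, effHo.map_id]
  · intro _
    refine ⟨effHo.preimage (inv (effHo.map f)), ?_, ?_⟩
    · rw [← effHo_map_eq_iff, effHo.map_comp, effHo.map_preimage, IsIso.hom_inv_id,
        effHo.map_id]
    · rw [← effHo_map_eq_iff, effHo.map_comp, effHo.map_preimage, IsIso.inv_hom_id,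
        effHo.map_id]

theorem effEqv_two_out_of_six {X Y Z W : EffObj} (f : X ⟶ Y) (g : Y ⟶ Z) (h : Z ⟶ W)
    (hfg : EffEqv (f ≫ g)) (hgh : EffEqv (g ≫ h)) :
    EffEqv f ∧ EffEqv g ∧ EffEqv h ∧ EffEqv (f ≫ g ≫ h) := by
  simp only [effEqv_iff_isIso, Functor.map_comp] at hfg hgh ⊢
  exact isIso_of_two_out_of_six _ _ _

theorem effEqv_of_isIso {B A : EffObj} (f : B ⟶ A) [IsIso f] : EffEqv f :=
  (effEqv_iff_isIso f).mpr inferInstance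

theorem EffEqv.homotopic_of_section {B A : EffObj} {f : B ⟶ A} (hf : EffEqv f) {k : A ⟶ B}
    (hk : k ≫ f = 𝟙 A) : EffHomotopic (f ≫ k) (𝟙 B) := by
  have : IsIso (effHo.map f) := (effEqv_iff_isIso f).mp hf
  have hinv : effHo.map k = inv (effHo.map f) := by
    rw [← Category.comp_id (effHo.map k), ← IsIso.hom_inv_id (effHo.map f), ← Category.assoc,
      ← effHo.map_comp, hk, effHo.map_id, Category.id_comp]
  rw [← effHo_map_eq_iff, effHo.map_comp, hinv, IsIso.hom_inv_id, effHo.map_id]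

section Fibration

variable {B A : EffObj} (f : B ⟶ A)

def HasTrackedLifts : Prop :=
  ∀ {ι : Type} {I : ι → ℕ} {b : ι → B.A} {a : ι → A.A} (π : ∀ x, A.Cell (f.f0 (b x)) (a x)),
    CompComputes I (fun x => B.α (b x)) → CompComputes I (fun x => A.α (a x)) →
    CompComputes I (fun x => (π x).val) →
    ∃ (b' : ι → B.A) (ρ : ∀ x, B.Cell (b x) (b' x)), (∀ x, f.f0 (b' x) = a x) ∧
      (∀ x, (f.f1 _ _ (ρ x)).val = (π x).val) ∧
      CompComputes I (fun x => B.α (b' x)) ∧ CompComputes I (fun x => (ρ x).val)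

def HasTrackedTransport : Prop :=
  ∀ {ι : Type} {I : ι → ℕ} {b b' : ι → B.A} (ρ : ∀ x, B.Cell (b x) (b' x))
    (π : ∀ x, A.Cell (f.f0 (b x)) (f.f0 (b' x))),
    CompComputes I (fun x => B.α (b x)) → CompComputes I (fun x => B.α (b' x)) →
    CompComputes I (fun x => (ρ x).val) → CompComputes I (fun x => (π x).val) →
    ∃ ρ' : ∀ x, B.Cell (b x) (b' x), (∀ x, (f.f1 _ _ (ρ' x)).val = (π x).val) ∧
      CompComputes I (fun x => (ρ' x).val)

theorem hasTrackedLifts_iff : HasTrackedLifts f ↔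
    ∃ φ ψ : ℕ →. ℕ, Partrec φ ∧ Partrec ψ ∧
      ∀ (b : B.A) (a : A.A) (π : ℕ), π ∈ A.hom (f.f0 b) a →
        ∃ (b' : B.A) (ρ : B.Cell b b'), f.f0 b' = a ∧ (f.f1 b b' ρ).val = π ∧
          B.α b' ∈ φ (Nat.pair (B.α b) (Nat.pair (A.α a) π)) ∧
          ρ.val ∈ ψ (Nat.pair (B.α b) (Nat.pair (A.α a) π)) := by
  constructor
  · intro h
    obtain ⟨b', ρ, hb', hρ, ⟨φ, pφ, mφ⟩, ⟨ψ, pψ, mψ⟩⟩ :=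
      h (ι := {p : B.A × A.A × ℕ // p.2.2 ∈ A.hom (f.f0 p.1) p.2.1}) (b := fun x => x.1.1)
        (a := fun x => x.1.2.1) (fun x => ⟨x.1.2.2, x.2⟩) (CompComputes.projL _ _)
        (CompComputes.proj32 _ _ _) (CompComputes.proj33 _ _ _)
    exact ⟨φ, ψ, pφ, pψ, fun b a π hπ =>
      let x : {p : B.A × A.A × ℕ // p.2.2 ∈ A.hom (f.f0 p.1) p.2.1} := ⟨(b, a, π), hπ⟩
      ⟨b' x, ρ x, hb' x, hρ x, mφ x, mψ x⟩⟩
  · rintro ⟨φ, ψ, pφ, pψ, h⟩ ι I b a π hb ha hπ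
    choose b' ρ hb' hρ mφ mψ using fun x => h (b x) (a x) (π x).val (π x).prop
    have hin := hb.pair (ha.pair hπ)
    exact ⟨b', ρ, hb', hρ, CompComputes.comp ⟨φ, pφ, mφ⟩ hin, CompComputes.comp ⟨ψ, pψ, mψ⟩ hin⟩

theorem hasTrackedTransport_iff : HasTrackedTransport f ↔
    ∃ χ : ℕ →. ℕ, Partrec χ ∧
      ∀ (b b' : B.A) (ρ : B.Cell b b') (π : ℕ), π ∈ A.hom (f.f0 b) (f.f0 b') →
        ∃ ρ' : B.Cell b b', (f.f1 b b' ρ').val = π ∧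
          ρ'.val ∈ χ (Nat.pair (B.α b) (Nat.pair (B.α b') (Nat.pair ρ.val π))) := by
  constructor
  · intro h
    obtain ⟨ρ', hρ', χ, pχ, mχ⟩ :=
      h (ι := {p : B.A × B.A × ℕ × ℕ //
          p.2.2.1 ∈ B.hom p.1 p.2.1 ∧ p.2.2.2 ∈ A.hom (f.f0 p.1) (f.f0 p.2.1)})
        (b := fun x => x.1.1) (b' := fun x => x.1.2.1) (fun x => ⟨x.1.2.2.1, x.2.1⟩)
        (fun x => ⟨x.1.2.2.2, x.2.2⟩) (CompComputes.projL _ _) (CompComputes.proj42 _ _ _ _)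
        (CompComputes.proj43 _ _ _ _) (CompComputes.proj44 _ _ _ _)
    exact ⟨χ, pχ, fun b b' ρ π hπ =>
      let x : {p : B.A × B.A × ℕ × ℕ //
          p.2.2.1 ∈ B.hom p.1 p.2.1 ∧ p.2.2.2 ∈ A.hom (f.f0 p.1) (f.f0 p.2.1)} :=
        ⟨(b, b', ρ.val, π), ρ.prop, hπ⟩
      ⟨ρ' x, hρ' x, mχ x⟩⟩
  · rintro ⟨χ, pχ, h⟩ ι I b b' ρ π hb hb' hρ hπ
    choose ρ' hρ' mχ using fun x => h (b x) (b' x) (ρ x) (π x).val (π x).prop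
    exact ⟨ρ', hρ', CompComputes.comp ⟨χ, pχ, mχ⟩ (hb.pair (hb'.pair (hρ.pair hπ)))⟩

theorem effFib_iff : EffFib f ↔ HasTrackedLifts f ∧ HasTrackedTransport f := by
  rw [hasTrackedLifts_iff, hasTrackedTransport_iff]
  rfl

end Fibration

theorem effFib_comp {X Y Z : EffObj} {f : X ⟶ Y} {g : Y ⟶ Z} (hf : EffFib f) (hg : EffFib g) :
    EffFib (f ≫ g) := by
  obtain ⟨liftf, transf⟩ := (effFib_iff f).mp hf
  obtain ⟨liftg, transg⟩ := (effFib_iff g).mp hg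
  refine (effFib_iff _).mpr ⟨fun π hb ha hπ => ?_, fun ρ π hb hb' hρ hπ => ?_⟩
  · obtain ⟨y, σ, hy, hσ, ty, tσ⟩ := liftg π (f.tracked_f0 hb) ha hπ
    obtain ⟨x, ρ, hx, hρ, tx, tρ⟩ := liftf σ hb ty tσ
    exact ⟨x, ρ, fun i => (congrArg g.f0 (hx i)).trans (hy i),
      fun i => (g.f1_val_congr rfl (hx i) _ (σ i) (hρ i)).trans (hσ i), tx, tρ⟩
  · obtain ⟨σ, hσ, tσ⟩ := transg (fun i => f.f1 _ _ (ρ i)) π (f.tracked_f0 hb)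
      (f.tracked_f0 hb') (f.tracked_f1 ρ hb hb' hρ) hπ
    obtain ⟨ρ', hρ', tρ'⟩ := transf ρ σ hb hb' hρ tσ
    exact ⟨ρ', fun i => (g.f1_val_congr rfl rfl _ _ (hρ' i)).trans (hσ i), tρ'⟩

theorem effFib_of_isIso {B A : EffObj} (f : B ⟶ A) [IsIso f] : EffFib f := by
  have hgf (b : B.A) : (inv f).f0 (f.f0 b) = b := EffHom.congr_f0 (IsIso.hom_inv_id f) b
  have hfg (a : A.A) : f.f0 ((inv f).f0 a) = a := EffHom.congr_f0 (IsIso.inv_hom_id f) a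
  have hf1 {a a' : A.A} (π : A.Cell a a') : (f.f1 _ _ ((inv f).f1 a a' π)).val = π.val :=
    EffHom.congr_f1 (IsIso.inv_hom_id f) a a' π
  refine (effFib_iff f).mpr ⟨fun π hb ha hπ => ?_, fun _ π hb hb' _ hπ => ?_⟩
  · refine ⟨fun i => (inv f).f0 _, fun i => ((inv f).f1 _ _ (π i)).cast (hgf _) rfl,
      fun i => hfg _, fun i => ?_, (inv f).tracked_f0 ha,
      (inv f).tracked_f1 π (f.tracked_f0 hb) ha hπ⟩
    exact (f.f1_val_congr (hgf _).symm rfl _ _ rfl).trans (hf1 _)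
  · refine ⟨fun i => ((inv f).f1 _ _ (π i)).cast (hgf _) (hgf _), fun i => ?_,
      (inv f).tracked_f1 π (f.tracked_f0 hb) (f.tracked_f0 hb') hπ⟩
    exact (f.f1_val_congr (hgf _).symm (hgf _).symm _ _ rfl).trans (hf1 _)

section Terminal

def effTerminal : EffObj where
  A := PUnit
  α _ := 0
  hom _ _ := {0}
  idc := (CompComputes.const _ 0).toFinds fun _ => rfl
  invc := (CompComputes.const _ 0).toFinds fun _ => rfl
  compc := (CompComputes.const _ 0).toFinds fun _ => rfl

def effTerminal.from (B : EffObj) : B ⟶ effTerminal where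
  f0 _ := PUnit.unit
  f1 _ _ _ := ⟨0, rfl⟩
  tr0 := CompComputes.const _ 0
  tr1 := CompComputes.const _ 0

theorem effTerminal.hom_ext {B : EffObj} (f g : B ⟶ effTerminal) : f = g :=
  EffHom.ext_val (fun _ => rfl) fun b b' ρ => (f.f1 b b' ρ).prop.trans (g.f1 b b' ρ).prop.symm

theorem effTerminal_isTerminalObj : IsTerminalObj effTerminal :=
  fun B => ⟨effTerminal.from B, fun g => effTerminal.hom_ext g _⟩

theorem effFib_to_terminal {B : EffObj} (f : B ⟶ effTerminal) : EffFib f := by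
  have hcell {b b' : B.A} (ρ : B.Cell b b') (π : effTerminal.Cell (f.f0 b) (f.f0 b')) :
      (f.f1 b b' ρ).val = π.val :=
    (f.f1 b b' ρ).prop.trans π.prop.symm
  refine (effFib_iff f).mpr ⟨fun π hb _ _ => ?_, fun ρ π _ _ hρ _ => ⟨ρ, fun i => hcell _ _, hρ⟩⟩
  obtain ⟨c, hc⟩ := B.tracked.id hb
  exact ⟨_, c, fun _ => rfl, fun i => hcell _ (π i), hb, hc⟩

end Terminal

section Pullback

variable {X Y Z : EffObj} (f : X ⟶ Z) (g : Y ⟶ Z)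

abbrev PBPoint : Type := {p : X.A × Y.A // f.f0 p.1 = g.f0 p.2}

def pbα (p : PBPoint f g) : ℕ := Nat.pair (X.α p.1.1) (Y.α p.1.2)

def pbHom (p p' : PBPoint f g) : Set ℕ :=
  {n | ∃ (h₁ : n.unpair.1 ∈ X.hom p.1.1 p'.1.1) (h₂ : n.unpair.2 ∈ Y.hom p.1.2 p'.1.2),
    (f.f1 _ _ ⟨_, h₁⟩).val = (g.f1 _ _ ⟨_, h₂⟩).val}

variable {f g}

theorem pair_mem_pbHom {p p' : PBPoint f g} (ρ : X.Cell p.1.1 p'.1.1) (σ : Y.Cell p.1.2 p'.1.2)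
    (h : (f.f1 _ _ ρ).val = (g.f1 _ _ σ).val) : Nat.pair ρ.val σ.val ∈ pbHom f g p p' := by
  refine ⟨by simpa using ρ.prop, by simpa using σ.prop, ?_⟩
  exact ((f.f1_val_congr rfl rfl _ ρ (by simp)).trans h).trans
    (g.f1_val_congr rfl rfl σ _ (by simp))

section Families

variable {ι : Type} {I : ι → ℕ} {p : ι → PBPoint f g}

theorem CompComputes.pb_fst (hp : CompComputes I (fun x => pbα f g (p x))) :
    CompComputes I (fun x => X.α (p x).1.1) :=
  (CompComputes.projL _ (fun x => Y.α (p x).1.2)).comp hp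

theorem CompComputes.pb_snd (hp : CompComputes I (fun x => pbα f g (p x))) :
    CompComputes I (fun x => Y.α (p x).1.2) :=
  (CompComputes.projR (fun x => X.α (p x).1.1) _).comp hp

/-- Any pair of tracked cells between pullback points becomes a pullback cell after
transporting its first component over the image of the second. -/
theorem exists_pbCells (hf : HasTrackedTransport f) {p' : ι → PBPoint f g}
    (ρ : ∀ x, X.Cell (p x).1.1 (p' x).1.1) (σ : ∀ x, Y.Cell (p x).1.2 (p' x).1.2)
    (hp : CompComputes I (fun x => pbα f g (p x))) (hp' : CompComputes I (fun x => pbα f g (p' x)))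
    (hρ : CompComputes I (fun x => (ρ x).val)) (hσ : CompComputes I (fun x => (σ x).val)) :
    ∃ c : ∀ x, {n // n ∈ pbHom f g (p x) (p' x)},
      (∀ x, (c x).val.unpair.2 = (σ x).val) ∧ CompComputes I (fun x => (c x).val) := by
  obtain ⟨ρ', hρ', tρ'⟩ := hf ρ (fun x => (g.f1 _ _ (σ x)).cast (p x).2.symm (p' x).2.symm)
    hp.pb_fst hp'.pb_fst hρ (g.tracked_f1 σ hp.pb_snd hp'.pb_snd hσ)
  exact ⟨fun x => ⟨_, pair_mem_pbHom (ρ' x) (σ x) (hρ' x)⟩, fun x => by simp,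
    tρ'.pair hσ⟩

theorem pbHom_fst_mem {p p' : PBPoint f g} (c : {n // n ∈ pbHom f g p p'}) :
    c.val.unpair.1 ∈ X.hom p.1.1 p'.1.1 :=
  c.prop.1

theorem pbHom_snd_mem {p p' : PBPoint f g} (c : {n // n ∈ pbHom f g p p'}) :
    c.val.unpair.2 ∈ Y.hom p.1.2 p'.1.2 :=
  c.prop.2.1

end Families

theorem pb_trackedGroupoid (hf : HasTrackedTransport f) :
    TrackedGroupoid (PBPoint f g) (pbα f g) (pbHom f g) where
  id hp := by
    obtain ⟨ρ, hρ⟩ := X.tracked.id hp.pb_fst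
    obtain ⟨σ, hσ⟩ := Y.tracked.id hp.pb_snd
    obtain ⟨c, -, hc⟩ := exists_pbCells hf ρ σ hp hp hρ hσ
    exact ⟨c, hc⟩
  inv c hp hp' hc := by
    obtain ⟨ρ, hρ⟩ := X.tracked.inv (fun x => ⟨_, pbHom_fst_mem (c x)⟩) hp.pb_fst hp'.pb_fst
      hc.unpair_fst
    obtain ⟨σ, hσ⟩ := Y.tracked.inv (fun x => ⟨_, pbHom_snd_mem (c x)⟩) hp.pb_snd hp'.pb_snd
      hc.unpair_snd
    obtain ⟨c', -, hc'⟩ := exists_pbCells hf ρ σ hp' hp hρ hσ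
    exact ⟨c', hc'⟩
  comp c c' hp hp' hp'' hc hc' := by
    obtain ⟨ρ, hρ⟩ := X.tracked.comp (fun x => ⟨_, pbHom_fst_mem (c x)⟩)
      (fun x => ⟨_, pbHom_fst_mem (c' x)⟩) hp.pb_fst hp'.pb_fst hp''.pb_fst hc.unpair_fst
      hc'.unpair_fst
    obtain ⟨σ, hσ⟩ := Y.tracked.comp (fun x => ⟨_, pbHom_snd_mem (c x)⟩)
      (fun x => ⟨_, pbHom_snd_mem (c' x)⟩) hp.pb_snd hp'.pb_snd hp''.pb_snd hc.unpair_snd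
      hc'.unpair_snd
    obtain ⟨c'', -, hc''⟩ := exists_pbCells hf ρ σ hp hp'' hρ hσ
    exact ⟨c'', hc''⟩

variable (f g)

def effPB (hf : EffFib f) : EffObj :=
  EffObj.ofTracked (PBPoint f g) (pbα f g) (pbHom f g)
    (pb_trackedGroupoid ((effFib_iff f).mp hf).2)

variable (hf : EffFib f)

def effPB.fst : effPB f g hf ⟶ X where
  f0 p := p.1.1
  f1 _ _ c := ⟨_, pbHom_fst_mem c⟩
  tr0 := CompComputes.projL _ _
  tr1 := (CompComputes.proj33 _ _ _).unpair_fst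

def effPB.snd : effPB f g hf ⟶ Y where
  f0 p := p.1.2
  f1 _ _ c := ⟨_, pbHom_snd_mem c⟩
  tr0 := CompComputes.projR _ _
  tr1 := (CompComputes.proj33 _ _ _).unpair_snd

variable {f g}

def effPB.lift {Q : EffObj} (q₁ : Q ⟶ X) (q₂ : Q ⟶ Y) (hq : q₁ ≫ f = q₂ ≫ g) :
    Q ⟶ effPB f g hf where
  f0 c := ⟨(q₁.f0 c, q₂.f0 c), EffHom.congr_f0 hq c⟩
  f1 c c' ρ := ⟨_, pair_mem_pbHom (q₁.f1 c c' ρ) (q₂.f1 c c' ρ) (EffHom.congr_f1 hq c c' ρ)⟩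
  tr0 := q₁.tr0.pair q₂.tr0
  tr1 := q₁.tr1.pair q₂.tr1

theorem effPB.condition : effPB.fst f g hf ≫ f = effPB.snd f g hf ≫ g :=
  EffHom.ext_val (fun p => p.2) fun _ _ c => c.prop.2.2

@[simp]
theorem effPB.lift_fst {Q : EffObj} (q₁ : Q ⟶ X) (q₂ : Q ⟶ Y) (hq : q₁ ≫ f = q₂ ≫ g) :
    effPB.lift hf q₁ q₂ hq ≫ effPB.fst f g hf = q₁ :=
  EffHom.ext_val (fun _ => rfl) fun _ _ _ => congrArg Prod.fst (Nat.unpair_pair _ _)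

@[simp]
theorem effPB.lift_snd {Q : EffObj} (q₁ : Q ⟶ X) (q₂ : Q ⟶ Y) (hq : q₁ ≫ f = q₂ ≫ g) :
    effPB.lift hf q₁ q₂ hq ≫ effPB.snd f g hf = q₂ :=
  EffHom.ext_val (fun _ => rfl) fun _ _ _ => congrArg Prod.snd (Nat.unpair_pair _ _)

theorem effPB_isPB : IsPB (effPB.fst f g hf) (effPB.snd f g hf) f g := by
  refine ⟨effPB.condition hf, fun Q q₁ q₂ hq =>
    ⟨effPB.lift hf q₁ q₂ hq, ⟨effPB.lift_fst hf _ _ hq, effPB.lift_snd hf _ _ hq⟩, ?_⟩⟩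
  rintro m ⟨h₁, h₂⟩
  refine EffHom.ext_val (fun c => Subtype.ext (Prod.ext (EffHom.congr_f0 h₁ c)
    (EffHom.congr_f0 h₂ c))) fun c c' ρ => ?_
  change (m.f1 c c' ρ).val = Nat.pair (q₁.f1 c c' ρ).val (q₂.f1 c c' ρ).val
  rw [← EffHom.congr_f1 h₁, ← EffHom.congr_f1 h₂]
  exact (Nat.pair_unpair _).symm

theorem effPB_snd_fib : EffFib (effPB.snd f g hf) := by
  obtain ⟨lift, transport⟩ := (effFib_iff f).mp hf
  refine (effFib_iff _).mpr ⟨fun {_ _ p y} σ hp hy hσ => ?_, fun c σ hp hp' hc hσ => ?_⟩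
  · obtain ⟨x, ρ, hx, hρ, tx, tρ⟩ := lift (fun i => (g.f1 _ _ (σ i)).cast (p i).2.symm rfl)
      hp.pb_fst (g.tracked_f0 hy) (g.tracked_f1 σ hp.pb_snd hy hσ)
    let p' (i : _) : PBPoint f g := ⟨(x i, y i), hx i⟩
    obtain ⟨c, hc, tc⟩ := exists_pbCells transport (p' := p') ρ σ hp (tx.pair hy) tρ hσ
    exact ⟨p', c, fun _ => rfl, hc, tx.pair hy, tc⟩
  · obtain ⟨c', hc', tc'⟩ := exists_pbCells transport (fun i => (effPB.fst f g hf).f1 _ _ (c i))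
      σ hp hp' hc.unpair_fst hσ
    exact ⟨c', hc', tc'⟩

theorem effPB.homotopic_ext {Q : EffObj} {u v : Q ⟶ effPB f g hf}
    (h₁ : EffHomotopic (u ≫ effPB.fst f g hf) (v ≫ effPB.fst f g hf))
    (h₂ : EffHomotopic (u ≫ effPB.snd f g hf) (v ≫ effPB.snd f g hf)) : EffHomotopic u v := by
  obtain ⟨ρ, hρ⟩ := effHomotopic_iff.mp h₁
  obtain ⟨σ, hσ⟩ := effHomotopic_iff.mp h₂
  obtain ⟨c, -, hc⟩ := exists_pbCells ((effFib_iff f).mp hf).2 ρ σ u.tr0 v.tr0 hρ hσ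
  exact effHomotopic_iff.mpr ⟨c, hc⟩

end Pullback

section TrivialFibration

variable {X Y : EffObj}

theorem exists_conj_cells (w : Y ⟶ X) {k : Y.A → X.A}
    (hk : CompComputes Y.α (fun y => X.α (k y)))
    (ρ : ∀ y, X.Cell (w.f0 y) (k y)) (hρ : CompComputes Y.α (fun y => (ρ y).val)) :
    ∃ κ : ∀ x : Y.Path, X.Cell (k x.1) (k x.2.1),
      CompComputes Y.pathCode (fun x => (κ x).val) := by
  have hk₁ := (hk.precomp Sigma.fst).comp Y.pathCode_src
  have hk₂ := (hk.precomp fun x : Y.Path => x.2.1).comp Y.pathCode_tgt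
  obtain ⟨ρinv, hρinv⟩ := X.tracked.inv (fun x : Y.Path => ρ x.1)
    (w.tracked_f0 Y.pathCode_src) hk₁ ((hρ.precomp Sigma.fst).comp Y.pathCode_src)
  obtain ⟨κ₁, hκ₁⟩ := X.tracked.comp ρinv (fun x => w.f1 _ _ x.2.2) hk₁
    (w.tracked_f0 Y.pathCode_src) (w.tracked_f0 Y.pathCode_tgt) hρinv w.tr1
  exact X.tracked.comp κ₁ (fun x => ρ x.2.1) hk₁ (w.tracked_f0 Y.pathCode_tgt) hk₂ hκ₁
    ((hρ.precomp fun x : Y.Path => x.2.1).comp Y.pathCode_tgt)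

/-- A fibration with a homotopy section has a strict section: lift the homotopy
`w ≫ f ∼ 𝟙` pointwise, then transport the conjugated action of `w` on cells. -/
theorem EffFib.exists_section {f : X ⟶ Y} (hf : EffFib f) {w : Y ⟶ X}
    (hw : EffHomotopic (w ≫ f) (𝟙 Y)) : ∃ k : Y ⟶ X, k ≫ f = 𝟙 Y := by
  obtain ⟨lift, transport⟩ := (effFib_iff f).mp hf
  obtain ⟨c, hc⟩ := effHomotopic_iff.mp hw
  obtain ⟨k, ρ, hk, -, tk, tρ⟩ := lift (b := w.f0) (a := id) c w.tr0 (CompComputes.id _) hc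
  obtain ⟨κ, tκ⟩ := exists_conj_cells w tk ρ tρ
  obtain ⟨κ', hκ', tκ'⟩ := transport κ (fun x => x.2.2.cast (hk x.1).symm (hk x.2.1).symm)
    ((tk.precomp Sigma.fst).comp Y.pathCode_src)
    ((tk.precomp fun x : Y.Path => x.2.1).comp Y.pathCode_tgt) tκ Y.pathCode_cell
  exact ⟨⟨k, fun y y' σ => κ' ⟨y, y', σ⟩, tk, tκ'⟩,
    EffHom.ext_val hk fun y y' σ => hκ' ⟨y, y', σ⟩⟩

end TrivialFibration

theorem effPB_snd_eqv {X Y Z : EffObj} {f : X ⟶ Z} (g : Y ⟶ Z) (hf : EffFib f)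
    (he : EffEqv f) : EffEqv (effPB.snd f g hf) := by
  obtain ⟨w, -, hw⟩ := id he
  obtain ⟨k, hk⟩ := hf.exists_section hw
  have hq : (g ≫ k) ≫ f = 𝟙 Y ≫ g := by rw [Category.assoc, hk, Category.comp_id, Category.id_comp]
  refine ⟨effPB.lift hf (g ≫ k) (𝟙 Y) hq, effPB.homotopic_ext hf ?_ ?_,
    EffHomotopic.of_eq (effPB.lift_snd hf _ _ hq)⟩
  · have hfst : (effPB.snd f g hf ≫ effPB.lift hf (g ≫ k) (𝟙 Y) hq) ≫ effPB.fst f g hf =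
        effPB.fst f g hf ≫ f ≫ k := by
      rw [Category.assoc, effPB.lift_fst, ← Category.assoc, ← effPB.condition, Category.assoc]
    rw [hfst, Category.id_comp]
    simpa using (he.homotopic_of_section hk).whisker_left (effPB.fst f g hf)
  · exact EffHomotopic.of_eq (by simp)

theorem effTrivFib_of_isPB {X Y Z P : EffObj} (f : X ⟶ Z) (g : Y ⟶ Z) (p₁ : P ⟶ X)
    (p₂ : P ⟶ Y) (hf : EffFib f) (he : EffEqv f) (hP : IsPB p₁ p₂ f g) :
    EffFib p₂ ∧ EffEqv p₂ := by
  have hPB := (effPB_isPB (g := g) hf).isPullback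
  rw [← IsPullback.isoIsPullback_hom_snd _ _ hP.isPullback hPB]
  refine ⟨effFib_comp (effFib_of_isIso _) (effPB_snd_fib hf), ?_⟩
  have := (effEqv_iff_isIso _).mp (effPB_snd_eqv g hf he)
  rw [effEqv_iff_isIso, Functor.map_comp]
  infer_instance

def effProd (X Y : EffObj) : EffObj :=
  effPB (effTerminal.from X) (effTerminal.from Y) (effFib_to_terminal _)

section PathObject

variable (X : EffObj)

def effPath.ends (t : X.Path) : (effProd X X).A := ⟨(t.1, t.2.1), rfl⟩

theorem effPath.tracked_ends :
    CompComputes X.pathCode (fun t => (effProd X X).α (effPath.ends X t)) :=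
  X.pathCode_src.pair X.pathCode_tgt

def effPathObj : EffObj :=
  EffObj.ofTracked X.Path X.pathCode
    (fun t t' => (effProd X X).hom (effPath.ends X t) (effPath.ends X t'))
    ((effProd X X).tracked.comap _ _ (effPath.tracked_ends X))

def effPath.h : effPathObj X ⟶ effProd X X where
  f0 := effPath.ends X
  f1 _ _ c := ⟨c.val, c.prop⟩
  tr0 := effPath.tracked_ends X
  tr1 := CompComputes.proj33 _ _ _

def effPath.s : effPathObj X ⟶ X := effPath.h X ≫ effPB.fst _ _ _

def effPath.t : effPathObj X ⟶ X := effPath.h X ≫ effPB.snd _ _ _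

variable {X}

theorem effPath.h_fib : EffFib (effPath.h X) := by
  refine (effFib_iff _).mpr ⟨fun {_ _ t q} π ht hq hπ => ?_,
    fun _ π _ _ _ hπ => ⟨fun i => ⟨(π i).val, (π i).prop⟩, fun _ => rfl, hπ⟩⟩
  have hsrc := (X.pathCode_src.precomp t).comp ht
  have htgt := (X.pathCode_tgt.precomp t).comp ht
  -- the new path is `σ₂ ∘ t ∘ σ₁⁻¹`, where `π = (σ₁, σ₂)`
  obtain ⟨σ₁inv, hσ₁inv⟩ := X.tracked.inv (fun i => (effPB.fst _ _ _).f1 _ _ (π i)) hsrc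
    hq.pb_fst hπ.unpair_fst
  obtain ⟨c, hc⟩ := X.tracked.comp σ₁inv (fun i => (t i).2.2) hq.pb_fst hsrc htgt
    hσ₁inv ((X.pathCode_cell.precomp t).comp ht)
  obtain ⟨c', hc'⟩ := X.tracked.comp c (fun i => (effPB.snd _ _ _).f1 _ _ (π i))
    hq.pb_fst htgt hq.pb_snd hc hπ.unpair_snd
  exact ⟨fun i => ⟨(q i).1.1, (q i).1.2, c' i⟩, fun i => ⟨(π i).val, (π i).prop⟩, fun _ => rfl,
    fun _ => rfl, hq.pb_fst.pair (hq.pb_snd.pair hc'), hπ⟩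

variable (i : ∀ a : X.A, X.Cell a a) (hi : CompComputes X.α (fun a => (i a).val))

def effPath.r : X ⟶ effPathObj X where
  f0 a := ⟨a, a, i a⟩
  f1 _ _ ρ := ⟨_, pair_mem_pbHom ρ ρ rfl⟩
  tr0 := (CompComputes.id _).pair ((CompComputes.id _).pair hi)
  tr1 := (CompComputes.proj33 _ _ _).pair (CompComputes.proj33 _ _ _)

theorem effPath.r_s : effPath.r i hi ≫ effPath.s X = 𝟙 X :=
  EffHom.ext_val (fun _ => rfl) fun _ _ _ => congrArg Prod.fst (Nat.unpair_pair _ _)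

theorem effPath.r_t : effPath.r i hi ≫ effPath.t X = 𝟙 X :=
  EffHom.ext_val (fun _ => rfl) fun _ _ _ => congrArg Prod.snd (Nat.unpair_pair _ _)

theorem effPath.r_eqv : EffEqv (effPath.r i hi) := by
  refine ⟨effPath.s X, EffHomotopic.of_eq (effPath.r_s i hi), effHomotopic_iff.mpr
    ⟨fun t => ⟨_, pair_mem_pbHom (i t.1) t.2.2 rfl⟩, ?_⟩⟩
  exact ((hi.precomp Sigma.fst).comp X.pathCode_src).pair X.pathCode_cell

end PathObject

theorem effPathObj_isPathObj (X : EffObj) :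
    ∃ r : X ⟶ effPathObj X, IsPathObj EffPS r (effPath.s X) (effPath.t X) := by
  obtain ⟨i, hi⟩ := X.tracked.id (a := id) (CompComputes.id X.α)
  exact ⟨effPath.r i hi, effPath.r_eqv i hi, effPath.r_s i hi, effPath.r_t i hi, effProd X X,
    _, _, effPath.h X, (effPB_isPB _).isBinProd effTerminal_isTerminalObj, rfl, rfl, effPath.h_fib⟩

/-- With the fibrations and equivalences as defined, `EFF` is a
path category: it satisfies all seven axioms of a path category. -/
theorem EFF_is_path_category : IsPathCategory EffPS :=
  { fib_of_iso f _ := effFib_of_isIso f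
    fib_comp _ _ := effFib_comp
    terminal := ⟨effTerminal, effTerminal_isTerminalObj, fun _ => effFib_to_terminal⟩
    pullback f g hf := ⟨effPB f g hf, _, _, effPB_isPB hf, effPB_snd_fib hf⟩
    eqv_of_iso f _ := effEqv_of_isIso f
    two_out_of_six := effEqv_two_out_of_six
    path_obj X := let ⟨r, hr⟩ := effPathObj_isPathObj X; ⟨_, r, _, _, hr⟩
    triv_fib_pb := effTrivFib_of_isPB
    triv_fib_sect _ hf := fun ⟨_, _, hw⟩ => hf.exists_section hw }

end EffPaper
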